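/- The language L_ν = {u # v^inv : u,v ∈ {x,x̄}*, ν(u)=ν(v), μ(u)=μ(v)} is generated by the context-free grammar with nonterminals S,T,Z, start symbol S, terminals {x,x̄,#}, and productions S → ZSZ | xSx̄ | T; T → ZTZ | x̄Tx | #; Z → ZZ | x̄Zx | ε. Hence L_ν is context-free. -/

import Mathlib

/-- Step of a letter: `true` = x (+1), `false` = x̄ (-1). -/
def step (b : Bool) : ℤ := if b then 1 else -1

/-- μ(w): endpoint of the path traced by `w` starting at 0. -/
def mu (w : List Bool) : ℤ := (w.map step).sum

/-- ν(w): maximum position visited (max of μ over prefixes). -/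
def nu (w : List Bool) : ℤ := (w.inits.map mu).foldr max 0

/-- λ(w): negative of the minimum position visited. -/
def lam (w : List Bool) : ℤ := -((w.inits.map mu).foldr min 0)

/-- The formal inverse word: reverse and swap x ↔ x̄. -/
def winv (w : List Bool) : List Bool := w.reverse.map (fun b => !b)

/-- The word u # v^inv over the alphabet {x, x̄, #} (encoded as `Option Bool`). -/
def emb (u v : List Bool) : List (Option Bool) :=
  u.map some ++ [none] ++ (winv v).map some

/-- L_ν = {u # v^inv : ν(u) = ν(v), μ(u) = μ(v)}. -/
def Lnu : Language (Option Bool) :=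
  {w | ∃ u v : List Bool, w = emb u v ∧ nu u = nu v ∧ mu u = mu v}

-- Terminal and nonterminal symbols (nonterminals: S = 0, T = 1, Z = 2).
abbrev xT : Symbol (Option Bool) (Fin 3) := Symbol.terminal (some true)
abbrev xbT : Symbol (Option Bool) (Fin 3) := Symbol.terminal (some false)
abbrev hashT : Symbol (Option Bool) (Fin 3) := Symbol.terminal none
abbrev SN : Symbol (Option Bool) (Fin 3) := Symbol.nonterminal 0
abbrev TN : Symbol (Option Bool) (Fin 3) := Symbol.nonterminal 1
abbrev ZN : Symbol (Option Bool) (Fin 3) := Symbol.nonterminal 2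

noncomputable instance : DecidableEq (ContextFreeRule (Option Bool) (Fin 3)) :=
  Classical.decEq _

/-- The grammar S → ZSZ | xSx̄ | T;  T → ZTZ | x̄Tx | #;  Z → ZZ | x̄Zx | ε. -/
noncomputable def gNu : ContextFreeGrammar (Option Bool) where
  NT := Fin 3
  initial := 0
  rules :=
    {⟨0, [ZN, SN, ZN]⟩, ⟨0, [xT, SN, xbT]⟩, ⟨0, [TN]⟩,
     ⟨1, [ZN, TN, ZN]⟩, ⟨1, [xbT, TN, xT]⟩, ⟨1, [hashT]⟩,
     ⟨2, [ZN, ZN]⟩, ⟨2, [xbT, ZN, xT]⟩, ⟨2, []⟩}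

/-!
Soundness: interpret `S`, `T`, `Z` by `L_ν`, by `L_T = {u # v^inv : ν(u) = ν(v) = 0, μ(u) = μ(v)}`
and by the set `L_Z` of negative idempotents. Each production maps the product of the
interpretations of its right-hand side into that of its left-hand side, so every derivable word lies
in the interpretation of the start symbol.

Completeness: the chain `Z (x̄ Z)^k` derives every `w` with `ν(w) = 0`, `μ(w) = -k` (adding letters
at the end), and `(Z x)^k Z` every `w` with `ν(w) = μ(w) = k` (adding letters at the front).
Moreover `S ⇒* (Z x)^m Z S Z (x̄ Z)^m` and `T ⇒* Z (x̄ Z)^k T (Z x)^k Z`. Cutting `u` and `v` at a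
prefix reaching their common maximum `m = ν(u) = ν(v)` writes `u # v^inv` as a word derived from
`(Z x)^m Z · Z (x̄ Z)^k # (Z x)^k Z · Z (x̄ Z)^m`, with `k = m - μ(u)`.
-/

lemma List.foldr_max_le_iff {α : Type*} [LinearOrder α] (l : List α) (b c : α) :
    l.foldr max b ≤ c ↔ b ≤ c ∧ ∀ x ∈ l, x ≤ c := by
  induction l with
  | nil => simp
  | cons a l ih =>
    simp only [List.foldr_cons, max_le_iff, ih, List.mem_cons, forall_eq_or_imp]
    tauto

@[simp] lemma step_true : step true = 1 := rfl
@[simp] lemma step_false : step false = -1 := rfl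

@[simp] lemma mu_nil : mu [] = 0 := rfl
@[simp] lemma mu_cons (b : Bool) (w : List Bool) : mu (b :: w) = step b + mu w := rfl
@[simp] lemma mu_append (a b : List Bool) : mu (a ++ b) = mu a + mu b := by simp [mu]

@[simp] lemma nu_nil : nu [] = 0 := rfl

lemma nu_cons (b : Bool) (w : List Bool) : nu (b :: w) = max 0 (step b + nu w) := by
  refine eq_of_forall_ge_iff fun c => ?_
  have hnil : [] ∈ w.inits := by simp
  simp only [nu, List.inits_cons, List.map_cons, List.map_map, List.foldr_max_le_iff, max_le_iff,
    ← le_sub_iff_add_le', List.mem_map, List.mem_cons, forall_exists_index, and_imp,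
    forall_apply_eq_imp_iff₂, forall_eq_or_imp, Function.comp_apply, mu_cons, mu_nil]
  constructor
  · rintro ⟨h0, -, h⟩
    exact ⟨h0, by simpa using h _ hnil, h⟩
  · rintro ⟨h0, -, h⟩
    exact ⟨h0, h0, h⟩

lemma nu_nonneg (w : List Bool) : 0 ≤ nu w := by
  cases w with
  | nil => rfl
  | cons b w => rw [nu_cons]; exact le_max_left _ _

lemma mu_le_nu (w : List Bool) : mu w ≤ nu w := by
  induction w with
  | nil => rfl
  | cons b w ih => rw [nu_cons, mu_cons]; exact le_max_of_le_right (by omega)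

lemma nu_append (a b : List Bool) : nu (a ++ b) = max (nu a) (mu a + nu b) := by
  induction a with
  | nil => simp [nu_nonneg]
  | cons c a ih => simp only [List.cons_append, nu_cons, ih, mu_cons]; omega

lemma nu_append_of_loop {z : List Bool} (hn : nu z = 0) (hm : mu z = 0) (w : List Bool) :
    nu (z ++ w) = nu w := by
  rw [nu_append, hn, hm, zero_add, max_eq_right (nu_nonneg w)]

lemma winv_cons (b : Bool) (w : List Bool) : winv (b :: w) = winv w ++ [!b] := by simp [winv]

lemma winv_append (a b : List Bool) : winv (a ++ b) = winv b ++ winv a := by simp [winv]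

@[simp] lemma winv_winv (w : List Bool) : winv (winv w) = w := by simp [winv, Function.comp_def]

@[simp] lemma mu_winv (w : List Bool) : mu (winv w) = -mu w := by
  induction w with
  | nil => rfl
  | cons b w ih => cases b <;> simp [winv_cons, ih]

lemma nu_winv (w : List Bool) : nu (winv w) = nu w - mu w := by
  induction w with
  | nil => rfl
  | cons b w ih =>
    have := nu_nonneg w
    cases b <;>
      simp only [winv_cons, Bool.not_true, Bool.not_false, nu_append, ih, mu_winv, mu_cons, nu_cons,
        nu_nil, step_true, step_false, add_zero] <;> omega

namespace ContextFreeGrammar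

variable {T N : Type*}

def symbolLanguage (I : N → Language T) : Symbol T N → Language T
  | .terminal a => {[a]}
  | .nonterminal n => I n

def formLanguage (I : N → Language T) (α : List (Symbol T N)) : Language T :=
  (α.map (symbolLanguage I)).prod

lemma formLanguage_append (I : N → Language T) (α β : List (Symbol T N)) :
    formLanguage I (α ++ β) = formLanguage I α * formLanguage I β := by
  simp [formLanguage]

lemma mem_formLanguage_map_terminal (I : N → Language T) (w : List T) :
    w ∈ formLanguage I (w.map .terminal) := by
  induction w with
  | nil => exact Language.nil_mem_one
  | cons a w ih => exact Language.mem_mul.2 ⟨[a], rfl, w, ih, rfl⟩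

variable {g : ContextFreeGrammar T} {I : g.NT → Language T}

lemma Produces.formLanguage_le (hI : ∀ r ∈ g.rules, formLanguage I r.output ≤ I r.input)
    {α β : List (Symbol T g.NT)} (h : g.Produces α β) : formLanguage I β ≤ formLanguage I α := by
  obtain ⟨r, hr, hrw⟩ := h
  obtain ⟨p, q, rfl, rfl⟩ := hrw.exists_parts
  simp only [formLanguage_append]
  gcongr
  simpa [formLanguage, symbolLanguage] using hI r hr

lemma Derives.formLanguage_le (hI : ∀ r ∈ g.rules, formLanguage I r.output ≤ I r.input)
    {α β : List (Symbol T g.NT)} (h : g.Derives α β) : formLanguage I β ≤ formLanguage I α := by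
  induction h with
  | refl => exact le_rfl
  | tail _ hp ih => exact (hp.formLanguage_le hI).trans ih

theorem language_le_of_rules (hI : ∀ r ∈ g.rules, formLanguage I r.output ≤ I r.input) :
    g.language ≤ I g.initial := fun w hw => by
  simpa [formLanguage, symbolLanguage] using
    Derives.formLanguage_le hI hw (mem_formLanguage_map_terminal I w)

end ContextFreeGrammar

def langZ : Language (Option Bool) := {w | ∃ z, w = z.map some ∧ nu z = 0 ∧ mu z = 0}

def langT : Language (Option Bool) :=
  {w | ∃ u v, w = emb u v ∧ nu u = 0 ∧ nu v = 0 ∧ mu u = mu v}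

lemma emb_append_winv (z u z' v : List Bool) :
    emb (z ++ u) (winv z' ++ v) = z.map some ++ (emb u v ++ z'.map some) := by
  simp [emb, winv_append]

lemma emb_cons (b : Bool) (u v : List Bool) :
    emb (b :: u) (b :: v) = some b :: (emb u v ++ [some !b]) := by
  simp [emb, winv_cons]

lemma nu_winv_of_loop {z : List Bool} (hn : nu z = 0) (hm : mu z = 0) : nu (winv z) = 0 := by
  rw [nu_winv, hn, hm, sub_zero]

lemma one_le_langZ : 1 ≤ langZ := by
  rintro _ rfl
  exact ⟨[], rfl, rfl, rfl⟩

lemma langZ_mul_langZ_le : langZ * langZ ≤ langZ := by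
  rintro _ ⟨_, ⟨z, rfl, hn, hm⟩, _, ⟨z', rfl, hn', hm'⟩, rfl⟩
  exact ⟨z ++ z', by simp, by rw [nu_append_of_loop hn hm, hn'], by simp [hm, hm']⟩

lemma xbar_mul_langZ_mul_x_le : {[some false]} * (langZ * {[some true]}) ≤ langZ := by
  rintro _ ⟨_, rfl, _, ⟨_, ⟨z, rfl, hn, hm⟩, _, rfl, rfl⟩, rfl⟩
  refine ⟨false :: (z ++ [true]), by simp, ?_, by simp [hm]⟩
  simp [nu_cons, nu_append_of_loop hn hm]

lemma hash_le_langT : {[none]} ≤ langT := by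
  rintro _ rfl
  exact ⟨[], [], rfl, rfl, rfl, rfl⟩

lemma langZ_mul_langT_mul_langZ_le : langZ * (langT * langZ) ≤ langT := by
  rintro _ ⟨_, ⟨z, rfl, hzn, hzm⟩, _, ⟨_, ⟨u, v, rfl, hun, hvn, hm⟩, _, ⟨z', rfl, hn', hm'⟩, rfl⟩,
    rfl⟩
  refine ⟨z ++ u, winv z' ++ v, (emb_append_winv ..).symm, ?_, ?_, by simp [hzm, hm', hm]⟩
  · rw [nu_append_of_loop hzn hzm, hun]
  · rw [nu_append_of_loop (nu_winv_of_loop hn' hm') (by simp [hm']), hvn]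

lemma xbar_mul_langT_mul_x_le : {[some false]} * (langT * {[some true]}) ≤ langT := by
  rintro _ ⟨_, rfl, _, ⟨_, ⟨u, v, rfl, hun, hvn, hm⟩, _, rfl, rfl⟩, rfl⟩
  refine ⟨false :: u, false :: v, by simp [emb_cons], ?_, ?_, by simp [hm]⟩ <;>
    simp [nu_cons, hun, hvn]

lemma langT_le_Lnu : langT ≤ Lnu := by
  rintro _ ⟨u, v, rfl, hun, hvn, hm⟩
  exact ⟨u, v, rfl, hun.trans hvn.symm, hm⟩

lemma langZ_mul_Lnu_mul_langZ_le : langZ * (Lnu * langZ) ≤ Lnu := by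
  rintro _ ⟨_, ⟨z, rfl, hzn, hzm⟩, _, ⟨_, ⟨u, v, rfl, hn, hm⟩, _, ⟨z', rfl, hn', hm'⟩, rfl⟩, rfl⟩
  refine ⟨z ++ u, winv z' ++ v, (emb_append_winv ..).symm, ?_, by simp [hzm, hm', hm]⟩
  rw [nu_append_of_loop hzn hzm, nu_append_of_loop (nu_winv_of_loop hn' hm') (by simp [hm']), hn]

lemma x_mul_Lnu_mul_xbar_le : {[some true]} * (Lnu * {[some false]}) ≤ Lnu := by
  rintro _ ⟨_, rfl, _, ⟨_, ⟨u, v, rfl, hn, hm⟩, _, rfl, rfl⟩, rfl⟩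
  exact ⟨true :: u, true :: v, by simp [emb_cons], by simp [nu_cons, hn], by simp [hm]⟩

lemma mem_gNu_rules (r : ContextFreeRule (Option Bool) (Fin 3)) :
    r ∈ gNu.rules ↔ r = ⟨0, [ZN, SN, ZN]⟩ ∨ r = ⟨0, [xT, SN, xbT]⟩ ∨ r = ⟨0, [TN]⟩ ∨
      r = ⟨1, [ZN, TN, ZN]⟩ ∨ r = ⟨1, [xbT, TN, xT]⟩ ∨ r = ⟨1, [hashT]⟩ ∨
      r = ⟨2, [ZN, ZN]⟩ ∨ r = ⟨2, [xbT, ZN, xT]⟩ ∨ r = ⟨2, []⟩ := by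
  change r ∈ (insert _ _ : Finset _) ↔ _
  simp

def nuInterp : Fin 3 → Language (Option Bool) := ![Lnu, langT, langZ]

lemma gNu_language_le : gNu.language ≤ Lnu := by
  refine ContextFreeGrammar.language_le_of_rules (g := gNu) (I := nuInterp) fun r hr => ?_
  -- `gNu.NT` is `Fin 3` only after unfolding `gNu`; restating over `Fin 3` keeps `simp` working
  change ContextFreeRule (Option Bool) (Fin 3) at r
  change ContextFreeGrammar.formLanguage nuInterp r.output ≤ nuInterp r.input
  rcases (mem_gNu_rules r).1 hr with rfl | rfl | rfl | rfl | rfl | rfl | rfl | rfl | rfl <;>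
    simp [ContextFreeGrammar.formLanguage, ContextFreeGrammar.symbolLanguage, nuInterp,
      langZ_mul_Lnu_mul_langZ_le, x_mul_Lnu_mul_xbar_le, langT_le_Lnu,
      langZ_mul_langT_mul_langZ_le, xbar_mul_langT_mul_x_le, hash_le_langT,
      langZ_mul_langZ_le, xbar_mul_langZ_mul_x_le, one_le_langZ]

-- Derivations restated over `Fin 3`, for the same reason as in `gNu_language_le`.
def NuDerives (u v : List (Symbol (Option Bool) (Fin 3))) : Prop := gNu.Derives u v

namespace NuDerives

variable {u v w : List (Symbol (Option Bool) (Fin 3))}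

lemma refl (u : List (Symbol (Option Bool) (Fin 3))) : NuDerives u u :=
  ContextFreeGrammar.Derives.refl (g := gNu) u

lemma trans (h₁ : NuDerives u v) (h₂ : NuDerives v w) : NuDerives u w :=
  ContextFreeGrammar.Derives.trans h₁ h₂

lemma append_left (h : NuDerives u v) (p : List (Symbol (Option Bool) (Fin 3))) :
    NuDerives (p ++ u) (p ++ v) :=
  ContextFreeGrammar.Derives.append_left h p

lemma append_right (h : NuDerives u v) (p : List (Symbol (Option Bool) (Fin 3))) :
    NuDerives (u ++ p) (v ++ p) :=
  ContextFreeGrammar.Derives.append_right h p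

lemma append {u' v' : List (Symbol (Option Bool) (Fin 3))} (h : NuDerives u v)
    (h' : NuDerives u' v') : NuDerives (u ++ u') (v ++ v') :=
  (h.append_right u').trans (h'.append_left v)

lemma rule (i : Fin 3) (o p q : List (Symbol (Option Bool) (Fin 3)))
    (h : (⟨i, o⟩ : ContextFreeRule (Option Bool) (Fin 3)) ∈ gNu.rules := by
      exact (mem_gNu_rules _).2 (by simp)) :
    NuDerives (p ++ [.nonterminal i] ++ q) (p ++ o ++ q) :=
  ContextFreeGrammar.Produces.single (g := gNu)
    ⟨⟨i, o⟩, h, ContextFreeRule.rewrites_of_exists_parts _ p q⟩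

lemma rule_single (i : Fin 3) (o : List (Symbol (Option Bool) (Fin 3)))
    (h : (⟨i, o⟩ : ContextFreeRule (Option Bool) (Fin 3)) ∈ gNu.rules := by
      exact (mem_gNu_rules _).2 (by simp)) :
    NuDerives [.nonterminal i] o := by
  simpa using rule i o [] [] h

end NuDerives

lemma Z_derives_Z_xbar_Z_x : NuDerives [ZN] [ZN, xbT, ZN, xT] :=
  (NuDerives.rule_single 2 [ZN, ZN]).trans (NuDerives.rule 2 [xbT, ZN, xT] [ZN] [])

lemma Z_derives_xbar_Z_x_Z : NuDerives [ZN] [xbT, ZN, xT, ZN] :=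
  (NuDerives.rule_single 2 [ZN, ZN]).trans (NuDerives.rule 2 [xbT, ZN, xT] [] [ZN])

def terminals (w : List Bool) : List (Symbol (Option Bool) (Fin 3)) :=
  w.map fun b => .terminal (some b)

lemma terminals_append (u v : List Bool) : terminals (u ++ v) = terminals u ++ terminals v :=
  List.map_append ..

def chainForm (a : Symbol (Option Bool) (Fin 3)) (k : ℕ) : List (Symbol (Option Bool) (Fin 3)) :=
  ZN :: (List.replicate k [a, ZN]).flatten

lemma chainForm_succ (a : Symbol (Option Bool) (Fin 3)) (k : ℕ) :
    chainForm a (k + 1) = [ZN, a] ++ chainForm a k := by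
  simp [chainForm, List.replicate_succ]

lemma chainForm_succ' (a : Symbol (Option Bool) (Fin 3)) (k : ℕ) :
    chainForm a (k + 1) = chainForm a k ++ [a, ZN] := by
  simp [chainForm, List.replicate_succ']

lemma chainForm_derives_cons (a : Symbol (Option Bool) (Fin 3)) (k : ℕ) :
    NuDerives (chainForm a k) ([xbT, ZN, xT] ++ chainForm a k) :=
  Z_derives_xbar_Z_x_Z.append_right _

lemma chainForm_derives_append (a : Symbol (Option Bool) (Fin 3)) (k : ℕ) :
    NuDerives (chainForm a k) (chainForm a k ++ [xbT, ZN, xT]) := by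
  induction k with
  | zero => exact Z_derives_Z_xbar_Z_x
  | succ k ih => simpa [chainForm_succ] using ih.append_left [ZN, a]

lemma Z_cons_derives (p : List (Symbol (Option Bool) (Fin 3))) : NuDerives (ZN :: p) p := by
  simpa using NuDerives.rule 2 [] [] p

lemma append_Z_derives (p : List (Symbol (Option Bool) (Fin 3))) : NuDerives (p ++ [ZN]) p := by
  simpa using NuDerives.rule 2 [] p []

lemma chainForm_xbar_derives (w : List Bool) (hw : nu w = 0) :
    NuDerives (chainForm xbT (-mu w).toNat) (terminals w) := by
  induction w using List.reverseRecOn with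
  | nil => exact Z_cons_derives []
  | append_singleton w b ih =>
    have hsplit := nu_append w [b]
    rw [hw, nu_cons, nu_nil, add_zero] at hsplit
    have hnu : nu w = 0 := by have := nu_nonneg w; omega
    have hmu := mu_le_nu w
    rw [terminals_append]
    cases b with
    | false =>
      have hk : (-mu (w ++ [false])).toNat = (-mu w).toNat + 1 := by
        simp only [mu_append, mu_cons, mu_nil, step_false]; omega
      rw [hk, chainForm_succ']
      simpa [terminals] using
        (append_Z_derives (chainForm xbT _ ++ [xbT])).trans ((ih hnu).append_right [xbT])
    | true =>
      have hk : (-mu w).toNat = (-mu (w ++ [true])).toNat + 1 := by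
        simp only [mu_append, mu_cons, mu_nil, step_true] at hsplit ⊢; omega
      refine (chainForm_derives_append _ _).trans ?_
      simpa [hk, chainForm_succ', terminals] using (ih hnu).append_right [xT]

lemma chainForm_x_derives (w : List Bool) (hw : nu w = mu w) :
    NuDerives (chainForm xT (mu w).toNat) (terminals w) := by
  induction w with
  | nil => exact Z_cons_derives []
  | cons b w ih =>
    have hmu := mu_le_nu w
    have hnu := nu_nonneg w
    rw [nu_cons, mu_cons] at hw
    cases b with
    | true =>
      rw [step_true] at hw
      have hw' : nu w = mu w := by omega
      have hk : (mu (true :: w)).toNat = (mu w).toNat + 1 := by rw [mu_cons, step_true]; omega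
      rw [hk, chainForm_succ]
      simpa [terminals] using (Z_cons_derives _).trans ((ih hw').append_left [xT])
    | false =>
      rw [step_false] at hw
      have hw' : nu w = mu w := by omega
      have hk : (mu w).toNat = (mu (false :: w)).toNat + 1 := by rw [mu_cons, step_false]; omega
      refine (chainForm_derives_cons _ _).trans ?_
      simpa [hk, chainForm_succ, terminals] using (ih hw').append_left [xbT]

lemma S_derives_chainForms (m : ℕ) :
    NuDerives [SN] (chainForm xT m ++ [SN] ++ chainForm xbT m) := by
  induction m with
  | zero => exact NuDerives.rule_single 0 [ZN, SN, ZN]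
  | succ m ih =>
    have hstep : NuDerives [SN] [xT, ZN, SN, ZN, xbT] :=
      (NuDerives.rule_single 0 [xT, SN, xbT]).trans (NuDerives.rule 0 [ZN, SN, ZN] [xT] [xbT])
    rw [chainForm_succ' xT, chainForm_succ xbT]
    simpa using ih.trans ((hstep.append_left _).append_right _)

lemma T_derives_chainForms (k : ℕ) :
    NuDerives [TN] (chainForm xbT k ++ [TN] ++ chainForm xT k) := by
  induction k with
  | zero => exact NuDerives.rule_single 1 [ZN, TN, ZN]
  | succ k ih =>
    have hstep : NuDerives [TN] [xbT, ZN, TN, ZN, xT] :=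
      (NuDerives.rule_single 1 [xbT, TN, xT]).trans (NuDerives.rule 1 [ZN, TN, ZN] [xbT] [xT])
    rw [chainForm_succ' xbT, chainForm_succ xT]
    simpa using ih.trans ((hstep.append_left _).append_right _)

lemma S_derives_of_chainForms {m k : ℕ} {α β γ δ : List (Symbol (Option Bool) (Fin 3))}
    (hα : NuDerives (chainForm xT m) α) (hβ : NuDerives (chainForm xbT k) β)
    (hγ : NuDerives (chainForm xT k) γ) (hδ : NuDerives (chainForm xbT m) δ) :
    NuDerives [SN] (α ++ (β ++ [hashT] ++ γ) ++ δ) := by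
  have hT : NuDerives [TN] (chainForm xbT k ++ [hashT] ++ chainForm xT k) :=
    (T_derives_chainForms k).trans (NuDerives.rule 1 [hashT] _ _)
  have hS : NuDerives [SN] (chainForm xT m ++ (chainForm xbT k ++ [hashT] ++ chainForm xT k) ++
      chainForm xbT m) :=
    (S_derives_chainForms m).trans
      ((((NuDerives.rule_single 0 [TN]).trans hT).append_left _).append_right _)
  exact hS.trans (hα.append ((hβ.append (.refl _)).append hγ) |>.append hδ)

lemma exists_append_mu_eq_nu (u : List Bool) :
    ∃ u₁ u₂, u = u₁ ++ u₂ ∧ nu u₁ = mu u₁ ∧ mu u₁ = nu u ∧ nu u₂ = 0 := by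
  induction u with
  | nil => exact ⟨[], [], rfl, rfl, rfl, rfl⟩
  | cons b w ih =>
    obtain ⟨w₁, w₂, rfl, h₁, h₂, h₃⟩ := ih
    by_cases hb : step b + nu (w₁ ++ w₂) ≤ 0
    · exact ⟨[], b :: (w₁ ++ w₂), rfl, rfl, by rw [nu_cons, mu_nil]; omega, by rw [nu_cons]; omega⟩
    · refine ⟨b :: w₁, w₂, rfl, ?_, ?_, h₃⟩ <;> simp only [nu_cons, mu_cons] <;> omega

lemma Lnu_le_gNu_language : Lnu ≤ gNu.language := by
  rintro _ ⟨u, v, rfl, hn, hm⟩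
  obtain ⟨u₁, u₂, rfl, hu₁, hu₁', hu₂⟩ := exists_append_mu_eq_nu u
  obtain ⟨v₁, v₂, rfl, hv₁, hv₁', hv₂⟩ := exists_append_mu_eq_nu v
  have hβ := chainForm_xbar_derives u₂ hu₂
  have hδ := chainForm_xbar_derives (winv v₁) (by rw [nu_winv]; omega)
  have hγ := chainForm_x_derives (winv v₂) (by rw [nu_winv, mu_winv]; omega)
  have hα := chainForm_x_derives u₁ hu₁
  have hmu : mu v₂ = mu u₂ := by simp only [mu_append] at hm; omega
  rw [mu_winv, neg_neg, hv₁', ← hn, ← hu₁'] at hδ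
  rw [mu_winv, hmu] at hγ
  have hw : (emb (u₁ ++ u₂) (v₁ ++ v₂)).map .terminal =
      terminals u₁ ++ (terminals u₂ ++ [hashT] ++ terminals (winv v₂)) ++ terminals (winv v₁) := by
    simp [emb, terminals, winv_append, Function.comp_def]
  show NuDerives [SN] ((emb _ _).map Symbol.terminal)
  rw [hw]
  exact S_derives_of_chainForms hα hβ hγ hδ

/-- L_ν is generated by the grammar `gNu`; hence L_ν is context-free. -/
theorem stmt13 : gNu.language = Lnu ∧ Lnu.IsContextFree := by
  have h : gNu.language = Lnu := le_antisymm gNu_language_le Lnu_le_gNu_language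
  exact ⟨h, gNu, h⟩
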